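/- arXiv:2010.03676 — 4 statements merged into one kernel-verified Lean document; each statement's English description precedes it below -/
import Mathlib

section
/- Let A be a closable subgroup of a group Γ, and let B be a non-trivial subgroup of A. Then the normalizer of B in Γ is contained in clo(A). -/
/-!
Let `x` normalize a nontrivial `B ≤ A`, where `A` has local rank `r < iof Γ`, and pick
`1 ≠ b ∈ B`. A finitely generated subgroup of `⟨A, x⟩` lies in some `⟨S, x⟩`, where `⟨S⟩ ≤ A`
has rank `≤ r` and contains `b` and `x b x⁻¹`. Then `K = ⟨S, x⟩` has rank `≤ r + 1`, so it is
free. If its rank were `r + 1`, then, finitely generated free groups being residually finite and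
hence Hopfian, `S ∪ {x}` would be a basis of `K`; but conjugation by the basis element `x` cannot
map the nontrivial element `b` of the free factor `⟨S⟩` back into `⟨S⟩`. Hence
`localRank ⟨A, x⟩ ≤ localRank A`, so `x` is admissible over `A`, or over `⟨A, z⟩` when the
closability witness `z` itself is admissible.
-/

/-- The rank of a subgroup, as an extended natural number: the minimal cardinality of a
finite generating set, or `⊤` if the subgroup is not finitely generated. -/
noncomputable def subgroupRank {Γ : Type*} [Group Γ] (H : Subgroup Γ) : ℕ∞ :=
  ⨅ (S : Finset Γ) (_ : Subgroup.closure (S : Set Γ) = H), (S.card : ℕ∞)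

/-- `A` has local rank at most `r` if every finitely generated subgroup of `A` is contained
in a subgroup of `A` of rank at most `r`. -/
def LocalRankLE {Γ : Type*} [Group Γ] (A : Subgroup Γ) (r : ℕ) : Prop :=
  ∀ B : Subgroup Γ, B ≤ A → B.FG →
    ∃ C : Subgroup Γ, C ≤ A ∧ B ≤ C ∧ subgroupRank C ≤ (r : ℕ∞)

/-- The local rank of a subgroup: the least `r` such that `LocalRankLE A r`, or `⊤` if
there is no such `r`. -/
noncomputable def localRank {Γ : Type*} [Group Γ] (A : Subgroup Γ) : ℕ∞ :=
  ⨅ (r : ℕ) (_ : LocalRankLE A r), (r : ℕ∞)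

/-- A group is `k`-free if every subgroup of rank at most `k` is free. -/
def KFree (Γ : Type*) [Group Γ] (k : ℕ) : Prop :=
  ∀ H : Subgroup Γ, subgroupRank H ≤ (k : ℕ∞) → IsFreeGroup H

/-- The index of freedom of `Γ`: the supremum of all `k` such that `Γ` is `k`-free. -/
noncomputable def iof (Γ : Type*) [Group Γ] : ℕ∞ :=
  ⨆ (k : ℕ) (_ : KFree Γ k), (k : ℕ∞)

/-- A subgroup `A` of `Γ` is strongly closable if `localRank A < iof Γ`. -/
def StronglyClosable {Γ : Type*} [Group Γ] (A : Subgroup Γ) : Prop :=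
  localRank A < iof Γ

/-- A subgroup `A` of `Γ` is closable if it has finite local rank and there is some `z ∈ Γ`
with `localRank ⟨A, z⟩ < iof Γ`. -/
def Closable {Γ : Type*} [Group Γ] (A : Subgroup Γ) : Prop :=
  localRank A < ⊤ ∧ ∃ z : Γ, localRank (A ⊔ Subgroup.closure {z}) < iof Γ

/-- An element `x` of `Γ` is `A`-admissible if `⟨A, x⟩` is strongly closable and
`localRank ⟨A, x⟩ ≤ localRank A`. -/
def Admissible {Γ : Type*} [Group Γ] (A : Subgroup Γ) (x : Γ) : Prop :=
  StronglyClosable (A ⊔ Subgroup.closure {x}) ∧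
    localRank (A ⊔ Subgroup.closure {x}) ≤ localRank A

/-- A sequence `x₁, …, x_m` is `A`-admissible if each `x_i` is `⟨A, x₁, …, x_{i-1}⟩`-admissible. -/
def AdmissibleSeq {Γ : Type*} [Group Γ] : Subgroup Γ → List Γ → Prop
  | _, [] => True
  | A, x :: xs => Admissible A x ∧ AdmissibleSeq (A ⊔ Subgroup.closure {x}) xs

/-- `clo A` is the set of all `x ∈ Γ` which occur as the last term of an `A`-admissible
sequence. -/
def clo {Γ : Type*} [Group Γ] (A : Subgroup Γ) : Set Γ :=
  { x | ∃ l : List Γ, AdmissibleSeq A (l ++ [x]) }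

/-- The homomorphism `ι_{A,x}` from the free product `A ∗ ⟨t⟩` to `Γ` restricting to the
inclusion on `A` and sending `t` to `x`. -/
noncomputable def iotaAX {Γ : Type*} [Group Γ] (A : Subgroup Γ) (x : Γ) :
    Monoid.Coprod (↥A) (Multiplicative ℤ) →* Γ :=
  Monoid.Coprod.lift A.subtype (zpowersHom Γ x)

/-- Elements `g 0, …, g (m-1)` of `Γ` are independent if they freely generate a free subgroup,
i.e. the induced homomorphism from the free group on `m` generators is injective. -/
def Independent {Γ : Type*} [Group Γ] {m : ℕ} (g : Fin m → Γ) : Prop :=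
  Function.Injective (FreeGroup.lift g : FreeGroup (Fin m) →* Γ)

open Subgroup

theorem Equiv.Perm.exists_apply_eq_mul_of_mem {G : Type*} [Group G] (P : Set G) [Finite P]
    (g : G) : ∃ σ : Equiv.Perm P, ∀ (p : P) (h : (p : G) * g ∈ P), σ p = ⟨p * g, h⟩ := by
  classical
  let e : {p : P // (p : G) * g ∈ P} ≃ {q : P // (q : G) * g⁻¹ ∈ P} :=
    { toFun := fun p => ⟨⟨p.1 * g, p.2⟩, by simp [p.1.2]⟩
      invFun := fun q => ⟨⟨q.1 * g⁻¹, q.2⟩, by simp [q.1.2]⟩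
      left_inv := fun p => by simp
      right_inv := fun q => by simp }
  exact ⟨e.extendSubtype, fun p h => by rw [e.extendSubtype_apply_of_mem _ h]; rfl⟩

namespace FreeGroup

variable {α : Type*}

instance : Group.ResiduallyFinite (FreeGroup α) := by
  classical
  refine Group.residuallyFinite_of_forall_exists_finite_monoidHom fun w hw => ?_
  obtain ⟨L, rfl⟩ : ∃ L, mk L = w := ⟨_, mk_toWord⟩
  let P : Set (FreeGroup α) := Set.range fun k : Fin (L.length + 1) => mk (L.take k)
  have hP : ∀ k ≤ L.length, mk (L.take k) ∈ P := fun k hk => ⟨⟨k, by omega⟩, rfl⟩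
  let p₀ : P := ⟨1, hP 0 (Nat.zero_le _)⟩
  -- `σ a` moves each prefix `p` of `L` to `p * (of a)⁻¹`, so `(lift σ w)⁻¹` moves `1` to `w`.
  choose σ hσ using fun a => Equiv.Perm.exists_apply_eq_mul_of_mem P (of a)⁻¹
  have key : ∀ k (hk : k ≤ L.length), (lift σ (mk (L.take k)))⁻¹ p₀ = ⟨mk (L.take k), hP k hk⟩ := by
    intro k hk
    induction k with
    | zero => rfl
    | succ k ih =>
      obtain ⟨⟨a, b⟩, hu⟩ : ∃ u, L[k]? = some u := ⟨_, List.getElem?_eq_getElem hk⟩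
      have hsplit : mk (L.take (k + 1)) = mk (L.take k) * mk [(a, b)] := by
        rw [mul_mk, List.take_add_one, hu]; rfl
      have hmem : mk (L.take k) * mk [(a, b)] ∈ P := hsplit ▸ hP (k + 1) hk
      apply Subtype.ext
      change ((lift σ (mk (L.take (k + 1))))⁻¹ p₀ : FreeGroup α) = mk (L.take (k + 1))
      rw [hsplit, _root_.map_mul, mul_inv_rev, Equiv.Perm.mul_apply, ih (by omega)]
      cases b
      · change mk (L.take k) * (of a)⁻¹ ∈ P at hmem
        rw [show mk [(a, false)] = (of a)⁻¹ from rfl, _root_.map_inv, inv_inv, lift_apply_of,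
          hσ _ _ hmem]
      · change mk (L.take k) * of a ∈ P at hmem
        have : (σ a)⁻¹ ⟨mk (L.take k), hP k (by omega)⟩ = ⟨mk (L.take k) * of a, hmem⟩ := by
          rw [Equiv.Perm.inv_eq_iff_eq, hσ _ _ (by simpa using hP k (by omega))]
          simp
        rw [show mk [(a, true)] = of a from rfl, lift_apply_of, this]
  refine ⟨Equiv.Perm P, inferInstance, inferInstance, lift σ, fun h => hw ?_⟩
  have := congrArg Subtype.val (key L.length le_rfl)
  simp only [List.take_length, h, inv_one, Equiv.Perm.one_apply] at this
  exact this.symm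

theorem injective_of_surjective [Finite α] {f : FreeGroup α →* FreeGroup α}
    (hf : Function.Surjective f) : Function.Injective f := by
  refine (injective_iff_map_eq_one f).2 fun w hw => by_contra fun hw1 => ?_
  obtain ⟨N, hN⟩ := Group.exists_finiteIndexNormalSubgroup_notMem w hw1
  have : Finite (FreeGroup α →* FreeGroup α ⧸ N.toSubgroup) := Finite.of_equiv _ lift
  have hcomp : Function.Injective fun ρ : FreeGroup α →* FreeGroup α ⧸ N.toSubgroup => ρ.comp f :=
    fun _ _ h => (MonoidHom.cancel_right hf).1 h
  obtain ⟨ρ, hρ⟩ := Finite.injective_iff_surjective.1 hcomp (QuotientGroup.mk' N.toSubgroup)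
  apply hN
  change w ∈ N.toSubgroup
  rw [← QuotientGroup.eq_one_iff, ← QuotientGroup.mk'_apply, ← hρ,
    MonoidHom.comp_apply, hw, _root_.map_one]

theorem of_mul_mul_inv_notMem_closure (a : α) {β : FreeGroup α}
    (hβ : β ∈ closure (of '' {i | i ≠ a})) (hβ1 : β ≠ 1) :
    of a * β * (of a)⁻¹ ∉ closure (of '' {i | i ≠ a}) := by
  classical
  -- Map into the wreath product `FreeGroup α ≀ ℤ`: the free factor goes to the base at
  -- coordinate `0` and `of a` to the shift, so conjugation by `of a` moves it to coordinate `1`.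
  let shift : MulAut (ℤ → FreeGroup α) := MulEquiv.arrowCongr (Equiv.addRight 1) (MulEquiv.refl _)
  let Φ : FreeGroup α →* (ℤ → FreeGroup α) ⋊[zpowersHom _ shift] Multiplicative ℤ :=
    lift fun i => if i = a then .inr (.ofAdd 1) else .inl (Pi.mulSingle 0 (of i))
  have hΦ : ∀ h ∈ closure (of '' {i | i ≠ a}), Φ h = .inl (Pi.mulSingle 0 h) := by
    intro h hh
    induction hh using closure_induction with
    | mem _ hi =>
      obtain ⟨i, hi, rfl⟩ := hi
      simp [Φ, lift_apply_of, if_neg hi]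
    | one => simp
    | mul _ _ _ _ hu hv => simp [hu, hv, Pi.mulSingle_mul]
    | inv _ _ hu => simp [hu, Pi.mulSingle_inv]
  intro hmem
  have key : Φ (of a * β * (of a)⁻¹) = .inl (shift (Pi.mulSingle 0 β)) := by
    calc Φ (of a * β * (of a)⁻¹)
        = .inr (.ofAdd 1) * .inl (Pi.mulSingle 0 β) * .inr (.ofAdd 1)⁻¹ := by
          simp [Φ, ← hΦ β hβ, lift_apply_of]
      _ = .inl (zpowersHom _ shift (.ofAdd 1) (Pi.mulSingle 0 β)) := by
          rw [SemidirectProduct.inl_aut]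
      _ = .inl (shift (Pi.mulSingle 0 β)) := by simp
  rw [hΦ _ hmem, SemidirectProduct.inl_inj] at key
  exact hβ1 (by simpa [shift] using (congrFun key 1).symm)

end FreeGroup

namespace IsFreeGroup

variable {G : Type*} [Group G] [IsFreeGroup G] {ι : Type*} [Finite ι]

theorem finite_generators_and_card_le_of_surjective {f : FreeGroup ι →* G}
    (hf : Function.Surjective f) :
    Finite (Generators G) ∧ Nat.card (Generators G) ≤ Nat.card ι := by
  -- Homomorphisms to `ℤ/2` from `G` inject into those from `FreeGroup ι`; count them.
  let restrict : (Generators G → Multiplicative (ZMod 2)) → (ι → Multiplicative (ZMod 2)) :=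
    fun v => FreeGroup.lift.symm ((lift v).comp f)
  have hinj : Function.Injective restrict := fun v v' h =>
    lift.injective ((MonoidHom.cancel_right hf).1 (FreeGroup.lift.symm.injective h))
  have : Finite (Generators G → Multiplicative (ZMod 2)) := Finite.of_injective _ hinj
  have : Finite (Generators G) := by
    by_contra h
    rw [not_finite_iff_infinite] at h
    exact not_finite (Generators G → Multiplicative (ZMod 2))
  refine ⟨this, (Nat.pow_le_pow_iff_right (by norm_num : 1 < 2)).1 ?_⟩
  simpa [Nat.card_fun] using Nat.card_le_card_of_injective _ hinj

theorem injective_of_surjective_of_card_eq {f : FreeGroup ι →* G}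
    (hf : Function.Surjective f) (hcard : Nat.card (Generators G) = Nat.card ι) :
    Function.Injective f := by
  have := (finite_generators_and_card_le_of_surjective hf).1
  obtain ⟨e⟩ := Finite.card_eq.1 hcard
  let endo := ((FreeGroup.freeGroupCongr e).toMonoidHom.comp (toFreeGroup G).toMonoidHom).comp f
  have hendo : Function.Surjective endo :=
    (FreeGroup.freeGroupCongr e).surjective.comp ((toFreeGroup G).surjective.comp hf)
  exact fun u v h => FreeGroup.injective_of_surjective hendo (by simp [endo, h])

end IsFreeGroup

theorem Subgroup.exists_finset_subset_of_mem_closure {G : Type*} [Group G] {s : Set G} {g : G}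
    (hg : g ∈ closure s) : ∃ T : Finset G, ↑T ⊆ s ∧ g ∈ closure (T : Set G) := by
  classical
  induction hg using closure_induction with
  | mem y hy => exact ⟨{y}, by simpa using hy, subset_closure (by simp)⟩
  | one => exact ⟨∅, by simp, one_mem _⟩
  | mul u v _ _ hu hv =>
    obtain ⟨Tu, hTu, hu⟩ := hu
    obtain ⟨Tv, hTv, hv⟩ := hv
    refine ⟨Tu ∪ Tv, by simpa using ⟨hTu, hTv⟩, mul_mem ?_ ?_⟩
    · exact closure_mono (by simp) hu
    · exact closure_mono (by simp) hv
  | inv u _ hu =>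
    obtain ⟨T, hT, hu⟩ := hu
    exact ⟨T, hT, inv_mem hu⟩

theorem Subgroup.exists_finset_subset_le_closure_of_fg {G : Type*} [Group G] {s : Set G}
    {D : Subgroup G} (hD : D.FG) (hDs : D ≤ closure s) :
    ∃ T : Finset G, ↑T ⊆ s ∧ D ≤ closure (T : Set G) := by
  classical
  obtain ⟨S, rfl⟩ := hD
  induction S using Finset.induction_on with
  | empty => exact ⟨∅, by simp, by simp⟩
  | insert a S _ ih =>
    rw [Finset.coe_insert, closure_le, Set.insert_subset_iff] at hDs
    obtain ⟨Ta, hTa, ha⟩ := exists_finset_subset_of_mem_closure hDs.1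
    obtain ⟨TS, hTS, hS⟩ := ih ((closure_le _).2 hDs.2)
    refine ⟨Ta ∪ TS, by simpa using ⟨hTa, hTS⟩, ?_⟩
    rw [Finset.coe_insert, closure_le, Set.insert_subset_iff, ← closure_le]
    exact ⟨closure_mono (by simp) ha, hS.trans (closure_mono (by simp))⟩

section Rank

variable {Γ : Type*} [Group Γ]

theorem subgroupRank_le_card {H : Subgroup Γ} (S : Finset Γ) (hS : closure (S : Set Γ) = H) :
    subgroupRank H ≤ S.card :=
  iInf₂_le S hS

theorem exists_finset_card_le_of_subgroupRank_le {H : Subgroup Γ} {r : ℕ}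
    (h : subgroupRank H ≤ r) : ∃ S : Finset Γ, closure (S : Set Γ) = H ∧ S.card ≤ r := by
  have : subgroupRank H < (r + 1 : ℕ) := h.trans_lt (by exact_mod_cast r.lt_succ_self)
  simp only [subgroupRank, iInf_lt_iff] at this
  obtain ⟨S, hS, hlt⟩ := this
  exact ⟨S, hS, by exact_mod_cast Nat.lt_succ_iff.1 (by exact_mod_cast hlt)⟩

theorem subgroupRank_le_of_surjective {H : Subgroup Γ} {ι : Type*} [Fintype ι]
    {f : FreeGroup ι →* H} (hf : Function.Surjective f) : subgroupRank H ≤ Fintype.card ι := by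
  classical
  refine (subgroupRank_le_card (Finset.univ.image fun i => (f (FreeGroup.of i) : Γ)) ?_).trans
    (by exact_mod_cast Finset.card_image_le)
  rw [Finset.coe_image, Finset.coe_univ, Set.image_univ, ← FreeGroup.range_lift_eq_closure,
    show FreeGroup.lift (fun i => (f (FreeGroup.of i) : Γ)) = H.subtype.comp f from
      FreeGroup.ext_hom _ _ fun i => by simp, MonoidHom.range_comp, MonoidHom.range_eq_top.2 hf,
    ← MonoidHom.range_eq_map, subtype_range]

theorem localRankLE_of_localRank_eq {A : Subgroup Γ} {r : ℕ} (h : localRank A = r) :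
    LocalRankLE A r := by
  have hne : {r' | LocalRankLE A r'}.Nonempty := by
    by_contra hemp
    have hnone : ∀ r', ¬ LocalRankLE A r' := fun r' hr' => hemp ⟨r', hr'⟩
    simp [localRank, hnone] at h
  change (⨅ a ∈ {r' | LocalRankLE A r'}, (a : ℕ∞)) = r at h
  rw [← ENat.natCast_sInf hne, Nat.cast_inj] at h
  exact h ▸ Nat.sInf_mem hne

theorem localRank_le_of_localRankLE {A : Subgroup Γ} {r : ℕ} (h : LocalRankLE A r) :
    localRank A ≤ r :=
  iInf₂_le r h

theorem kFree_succ_of_lt_iof {r : ℕ} (h : (r : ℕ∞) < iof Γ) : KFree Γ (r + 1) := by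
  obtain ⟨k, hk, hrk⟩ := by simpa only [iof, lt_iSup_iff] using h
  exact fun H hH => hk H (hH.trans (by exact_mod_cast hrk))

end Rank

section FreeSubgroups

variable {Γ : Type*} [Group Γ] {ι : Type*}

theorem not_injective_lift_of_conj_mem (g : ι → Γ) (a : ι) {b : Γ}
    (hb : b ∈ closure (g '' {i | i ≠ a})) (hb1 : b ≠ 1)
    (hconj : g a * b * (g a)⁻¹ ∈ closure (g '' {i | i ≠ a})) :
    ¬ Function.Injective (FreeGroup.lift g) := by
  intro hinj
  have hmap : (closure (FreeGroup.of '' {i | i ≠ a})).map (FreeGroup.lift g) =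
      closure (g '' {i | i ≠ a}) := by
    rw [MonoidHom.map_closure, Set.image_image]
    simp only [FreeGroup.lift_apply_of]
  obtain ⟨β, hβ, rfl⟩ := mem_map.1 (hmap ▸ hb)
  obtain ⟨β', hβ', hβ'conj⟩ := mem_map.1 (hmap ▸ hconj)
  refine FreeGroup.of_mul_mul_inv_notMem_closure a hβ (by rintro rfl; exact hb1 (map_one _)) ?_
  rwa [hinj (show FreeGroup.lift g (FreeGroup.of a * β * (FreeGroup.of a)⁻¹) = FreeGroup.lift g β'
    by simp [hβ'conj])]

theorem subgroupRank_closure_range_lt_of_not_injective [Finite ι] (g : ι → Γ)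
    [IsFreeGroup (closure (Set.range g))] (hg : ¬ Function.Injective (FreeGroup.lift g)) :
    subgroupRank (closure (Set.range g)) < Nat.card ι := by
  set K := closure (Set.range g)
  have hK : (FreeGroup.lift g).range = K := FreeGroup.range_lift_eq_closure
  let ψ : FreeGroup ι →* K := (FreeGroup.lift g).codRestrict K fun u =>
    hK ▸ MonoidHom.mem_range.2 ⟨u, rfl⟩
  have hψ : Function.Surjective ψ := by
    rintro ⟨y, hy⟩
    obtain ⟨u, hu⟩ := MonoidHom.mem_range.1 (hK ▸ hy)
    exact ⟨u, Subtype.ext hu⟩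
  -- By Hopficity, a generating family of `K` of size `rank K` is a basis.
  have hlt : Nat.card (IsFreeGroup.Generators K) < Nat.card ι :=
    (IsFreeGroup.finite_generators_and_card_le_of_surjective hψ).2.lt_of_ne fun h =>
      hg fun u v huv => IsFreeGroup.injective_of_surjective_of_card_eq hψ h (Subtype.ext huv)
  have := (IsFreeGroup.finite_generators_and_card_le_of_surjective hψ).1
  let _ : Fintype (IsFreeGroup.Generators K) := Fintype.ofFinite _
  calc subgroupRank K ≤ Fintype.card (IsFreeGroup.Generators K) :=
        subgroupRank_le_of_surjective (f := (IsFreeGroup.toFreeGroup K).symm.toMonoidHom)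
          (IsFreeGroup.toFreeGroup K).symm.surjective
    _ < Nat.card ι := by rw [← Nat.card_eq_fintype_card]; exact_mod_cast hlt

end FreeSubgroups

section LocalRank

variable {Γ : Type*} [Group Γ]

theorem subgroupRank_closure_insert_le_of_conj_mem {S : Finset Γ} {x b : Γ} {r : ℕ}
    (hfree : KFree Γ (r + 1)) (hS : S.card ≤ r) (hb : b ∈ closure (S : Set Γ)) (hb1 : b ≠ 1)
    (hxbx : x * b * x⁻¹ ∈ closure (S : Set Γ)) :
    subgroupRank (closure (insert x (S : Set Γ))) ≤ r := by
  classical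
  let g : Option S → Γ := fun o => o.elim x Subtype.val
  have hrange : Set.range g = insert x ↑S := by simp [g, Option.range_elim]
  have himage : g '' {i | i ≠ none} = ↑S := by
    ext y
    simp [g, Option.ne_none_iff_exists']
  rw [← hrange]
  have : IsFreeGroup (closure (Set.range g)) := hfree _ <|
    (subgroupRank_le_card (insert x S) (by rw [Finset.coe_insert, hrange])).trans
      (by exact_mod_cast (Finset.card_insert_le x S).trans (by omega))
  have hrank := subgroupRank_closure_range_lt_of_not_injective g
    (not_injective_lift_of_conj_mem g none (himage ▸ hb) hb1 (himage ▸ hxbx))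
  rw [Finite.card_option, Nat.card_eq_finsetCard, Nat.cast_add_one] at hrank
  exact (ENat.lt_natCast_add_one_iff.1 hrank).trans (by exact_mod_cast hS)

theorem localRankLE_sup_closure_of_mem_normalizer {A B : Subgroup Γ} {x b : Γ} {r : ℕ}
    (hA : LocalRankLE A r) (hfree : KFree Γ (r + 1)) (hBA : B ≤ A)
    (hx : x ∈ normalizer (B : Set Γ)) (hb : b ∈ B) (hb1 : b ≠ 1) :
    LocalRankLE (A ⊔ closure {x}) r := by
  classical
  intro D hDle hDfg
  obtain ⟨T, hTA, hDT⟩ := exists_finset_subset_le_closure_of_fg (s := ↑A ∪ {x}) hDfg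
    (by rwa [Subgroup.closure_union, closure_eq])
  have hxbx : x * b * x⁻¹ ∈ B := (mem_normalizer_iff.1 hx b).1 hb
  let T' : Finset Γ := insert b (insert (x * b * x⁻¹) (T.erase x))
  have hTA' : (T' : Set Γ) ⊆ A := by
    intro y hy
    simp only [T', Finset.coe_insert, Finset.coe_erase, Set.mem_insert_iff, Set.mem_sdiff] at hy
    rcases hy with rfl | rfl | ⟨hyT, hyx⟩
    · exact hBA hb
    · exact hBA hxbx
    · exact (hTA hyT).resolve_right hyx
  obtain ⟨C, hCA, hTC, hCr⟩ := hA (closure T') ((closure_le A).2 hTA') ⟨T', rfl⟩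
  obtain ⟨S, rfl, hS⟩ := exists_finset_card_le_of_subgroupRank_le hCr
  have hT'S : ∀ y ∈ T', y ∈ closure (S : Set Γ) := fun y hy => hTC (subset_closure hy)
  refine ⟨closure (insert x ↑S), ?_, hDT.trans ((closure_le _).2 fun t ht => ?_),
    subgroupRank_closure_insert_le_of_conj_mem hfree hS (hT'S b (by simp [T'])) hb1
      (hT'S _ (by simp [T']))⟩
  · rw [closure_le, Set.insert_subset_iff]
    exact ⟨mem_sup_right (subset_closure rfl), subset_closure.trans (hCA.trans le_sup_left)⟩
  · by_cases htx : t = x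
    · exact subset_closure (htx ▸ Set.mem_insert t _)
    · exact closure_mono (Set.subset_insert _ _)
        (hT'S t (by simp [T', htx, Finset.mem_coe.1 ht]))

theorem admissible_of_mem_normalizer {A B : Subgroup Γ} {x : Γ} (hA : StronglyClosable A)
    (hBA : B ≤ A) (hB : B ≠ ⊥) (hx : x ∈ normalizer (B : Set Γ)) : Admissible A x := by
  obtain ⟨r, hr⟩ := ENat.ne_top_iff_exists.1 (hA.trans_le le_top).ne
  obtain ⟨b, hb, hb1⟩ := (bot_or_exists_ne_one B).resolve_left hB
  have hle : localRank (A ⊔ closure {x}) ≤ localRank A := by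
    rw [← hr]
    exact localRank_le_of_localRankLE <| localRankLE_sup_closure_of_mem_normalizer
      (localRankLE_of_localRank_eq hr.symm) (kFree_succ_of_lt_iof (hr ▸ hA)) hBA hx hb hb1
  exact ⟨hle.trans_lt hA, hle⟩

end LocalRank

/-- If `A` is a closable subgroup of `Γ` and `B` is a nontrivial subgroup of `A`, then the
normalizer of `B` in `Γ` is contained in `clo A`. -/
theorem normalizer_subset_clo {Γ : Type*} [Group Γ] (A B : Subgroup Γ)
    (hA : Closable A) (hBA : B ≤ A) (hB : B ≠ ⊥) :
    (Subgroup.normalizer (B : Set Γ) : Set Γ) ⊆ clo A := by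
  obtain ⟨-, z, hz⟩ := hA
  intro x hx
  by_cases hzA : localRank (A ⊔ closure {z}) ≤ localRank A
  · exact ⟨[z], ⟨hz, hzA⟩,
      admissible_of_mem_normalizer hz (hBA.trans le_sup_left) hB hx, trivial⟩
  · exact ⟨[], admissible_of_mem_normalizer ((not_le.1 hzA).trans hz) hBA hB hx, trivial⟩
end

section
/- Suppose that for m = 1, 2 we are given positive real numbers a_{m,0} and a_{m,1} with a_{m,0} ≤ a_{m,1}. Let C be a positive real number, and suppose that (x₁, x₂) is a point of [a_{1,0}, a_{1,1}] × [a_{2,0}, a_{2,1}] such that (x₁, x₂, C) ∈ 𝔑. Then Ω(x₁, x₂, C) ≤ A(C, a_{1,0}, a_{1,1}, a_{2,0}, a_{2,1}). -/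
open Real

/-- `ω(x,y,z) = (cosh x · cosh y − cosh z)/(sinh x · sinh y)`. -/
noncomputable def omegaFn (x y z : ℝ) : ℝ :=
  (Real.cosh x * Real.cosh y - Real.cosh z) / (Real.sinh x * Real.sinh y)

/-- `𝔑`: the set of triples of positive reals satisfying the triangle inequalities. -/
def frakN (x y z : ℝ) : Prop :=
  0 < x ∧ 0 < y ∧ 0 < z ∧ z ≤ x + y ∧ y ≤ x + z ∧ x ≤ y + z

/-- `Ω(x,y,z) = arccos(ω(x,y,z))`, the angle function on `𝔑`. -/
noncomputable def OmegaFn (x y z : ℝ) : ℝ := Real.arccos (omegaFn x y z)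

/-- `Ω̄(x,y,z) = arccos(min(max(ω(x,y,z), −1), 1))`, the clamped extension of `Ω`. -/
noncomputable def OmegaBar (x y z : ℝ) : ℝ :=
  Real.arccos (min (max (omegaFn x y z) (-1)) 1)

/-- The inverse hyperbolic cosine. -/
noncomputable def arccoshFn (x : ℝ) : ℝ := Real.log (x + Real.sqrt (x ^ 2 - 1))

/-- `θ(C,x) = Ω̄(arccosh(cosh x / cosh C), x, C)` if `x > C`, and `π/2` otherwise. -/
noncomputable def thetaFn (C x : ℝ) : ℝ :=
  if C < x then OmegaBar (arccoshFn (Real.cosh x / Real.cosh C)) x C else π / 2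

/-- `A₁(C, a_{1,0}, a_{1,1}, a_{2,0}, a_{2,1}) = max over corners of `Ω̄(a_{1,i}, a_{2,j}, C)`. -/
noncomputable def A1Fn (C a10 a11 a20 a21 : ℝ) : ℝ :=
  max (max (OmegaBar a10 a20 C) (OmegaBar a10 a21 C))
      (max (OmegaBar a11 a20 C) (OmegaBar a11 a21 C))

/-- `A₂(C, a_{1,0}, a_{1,1}, a_{2,0}, a_{2,1}) = max over (m,i) of `θ(C, a_{m,i})`. -/
noncomputable def A2Fn (C a10 a11 a20 a21 : ℝ) : ℝ :=
  max (max (thetaFn C a10) (thetaFn C a11)) (max (thetaFn C a20) (thetaFn C a21))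

/-- `A = max(A₁, A₂)`. -/
noncomputable def AFn (C a10 a11 a20 a21 : ℝ) : ℝ :=
  max (A1Fn C a10 a11 a20 a21) (A2Fn C a10 a11 a20 a21)

/-!
The identity `(cosh x cosh y - cosh z)² = sinh² x (sinh² y - sinh² z) + (cosh x cosh z - cosh y)²`
shows that `ω(x, y, C) ≥ √(1 - sinh² C / sinh² y)` as soon as `C ≤ y`, with equality when
`cosh x cosh C = cosh y`; the right-hand side is `cos θ(C, y)` and increases with `y`. Hence
`Ω(x₁, x₂, C) ≤ θ(C, a_{2,0})` if `C ≤ x₂`, and symmetrically if `C ≤ x₁`. If `x₁, x₂ < C`, then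
`ω(·, y, C)` is increasing for `y ≤ C` (this comes down to `sinh (b - a) ≤ sinh b - sinh a`), so
`Ω(x₁, x₂, C) ≤ Ω̄(a_{1,0}, a_{2,0}, C)`, where the clamp is harmless because `ω ≥ -1` on `𝔑`.
-/

namespace Real

theorem cosh_mul_cosh_sub_cosh_sq (x y z : ℝ) :
    (cosh x * cosh y - cosh z) ^ 2
      = sinh x ^ 2 * (sinh y ^ 2 - sinh z ^ 2) + (cosh x * cosh z - cosh y) ^ 2 := by
  rw [sinh_sq, sinh_sq, sinh_sq]; ring

theorem sinh_sub_le_sinh_sub_sinh {a b : ℝ} (ha : 0 ≤ a) (hab : a ≤ b) :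
    sinh (b - a) ≤ sinh b - sinh a := by
  have hba : 0 ≤ sinh (b - a) := sinh_nonneg_iff.2 (sub_nonneg.2 hab)
  have hsplit : sinh b = sinh a * cosh (b - a) + cosh a * sinh (b - a) := by
    rw [← sinh_add, add_sub_cancel]
  nlinarith [sinh_nonneg_iff.2 ha, one_le_cosh a, one_le_cosh (b - a)]

end Real

theorem arccoshFn_eq_arcosh : arccoshFn = arcosh := rfl

theorem omegaFn_comm (x y z : ℝ) : omegaFn x y z = omegaFn y x z := by
  rw [omegaFn, omegaFn, mul_comm (cosh x), mul_comm (sinh x)]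

theorem omegaFn_nonneg {x y z : ℝ} (hx : 0 < x) (hy : 0 < y) (hzy : cosh z ≤ cosh y) :
    0 ≤ omegaFn x y z := by
  have : cosh y ≤ cosh x * cosh y := le_mul_of_one_le_left (cosh_pos y).le (one_le_cosh x)
  exact div_nonneg (by linarith) (mul_pos (sinh_pos_iff.2 hx) (sinh_pos_iff.2 hy)).le

theorem sq_omegaFn {x y : ℝ} (z : ℝ) (hx : x ≠ 0) (hy : y ≠ 0) :
    omegaFn x y z ^ 2
      = 1 - (sinh z / sinh y) ^ 2 + ((cosh x * cosh z - cosh y) / (sinh x * sinh y)) ^ 2 := by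
  have hsx : sinh x ≠ 0 := sinh_ne_zero.2 hx
  have hsy : sinh y ≠ 0 := sinh_ne_zero.2 hy
  rw [omegaFn, div_pow, cosh_mul_cosh_sub_cosh_sq]
  field_simp

/-- `cos θ(C, x)` for `x > C`: `θ(C, x)` is the angle opposite the leg `C` in the right-angled
hyperbolic triangle with hypotenuse `x`, and `sin θ = sinh C / sinh x`. -/
noncomputable def cosThetaFn (C x : ℝ) : ℝ := √(1 - (sinh C / sinh x) ^ 2)

theorem monotoneOn_cosThetaFn (C : ℝ) : MonotoneOn (cosThetaFn C) (Set.Ioi 0) := by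
  intro x hx y hy hxy
  have hsx : 0 < sinh x := sinh_pos_iff.2 hx
  have hsxy : sinh x ≤ sinh y := sinh_le_sinh.2 hxy
  unfold cosThetaFn
  rw [div_pow, div_pow]
  gcongr

theorem cosThetaFn_le_omegaFn {x y z : ℝ} (hx : 0 < x) (hy : 0 < y) (hzy : cosh z ≤ cosh y) :
    cosThetaFn z y ≤ omegaFn x y z := by
  rw [cosThetaFn, sqrt_le_left (omegaFn_nonneg hx hy hzy), sq_omegaFn z hx.ne' hy.ne']
  nlinarith [sq_nonneg ((cosh x * cosh z - cosh y) / (sinh x * sinh y))]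

theorem omegaFn_eq_cosThetaFn {x y z : ℝ} (hx : 0 < x) (hy : 0 < y) (hzy : cosh z ≤ cosh y)
    (h : cosh x * cosh z = cosh y) : omegaFn x y z = cosThetaFn z y := by
  rw [cosThetaFn, ← sqrt_sq (omegaFn_nonneg hx hy hzy), sq_omegaFn z hx.ne' hy.ne', h]
  simp

theorem thetaFn_eq_arccos {C x : ℝ} (hC : 0 ≤ C) (hCx : C < x) :
    thetaFn C x = arccos (cosThetaFn C x) := by
  have hcosh : cosh C < cosh x :=
    cosh_lt_cosh.2 (by rwa [abs_of_nonneg hC, abs_of_pos (hC.trans_lt hCx)])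
  have ht : 1 < cosh x / cosh C := (one_lt_div (cosh_pos C)).2 hcosh
  rw [thetaFn, if_pos hCx, OmegaBar, arccoshFn_eq_arcosh,
    omegaFn_eq_cosThetaFn (arcosh_pos ht) (hC.trans_lt hCx) hcosh.le
      (by rw [cosh_arcosh ht.le]; field_simp [(cosh_pos C).ne'])]
  have hle : cosThetaFn C x ≤ 1 := sqrt_le_one.2 (by nlinarith [sq_nonneg (sinh C / sinh x)])
  have hnonneg : 0 ≤ cosThetaFn C x := sqrt_nonneg _
  rw [max_eq_left (by linarith), min_eq_left hle]

theorem OmegaFn_le_thetaFn {C a x y : ℝ} (hC : 0 ≤ C) (hx : 0 < x) (ha : 0 < a) (hay : a ≤ y)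
    (hCy : C ≤ y) : OmegaFn x y C ≤ thetaFn C a := by
  have hy : 0 < y := ha.trans_le hay
  have hbound : cosThetaFn C y ≤ omegaFn x y C :=
    cosThetaFn_le_omegaFn hx hy (cosh_le_cosh.2 (abs_le_abs_of_nonneg hC hCy))
  by_cases hCa : C < a
  · rw [thetaFn_eq_arccos hC hCa]
    exact arccos_le_arccos ((monotoneOn_cosThetaFn C ha hy hay).trans hbound)
  · rw [thetaFn, if_neg hCa]
    exact arccos_le_pi_div_two.2 ((sqrt_nonneg _).trans hbound)

theorem omegaFn_le_omegaFn_left {a b y z : ℝ} (ha : 0 < a) (hab : a ≤ b) (hy : 0 < y)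
    (hyz : cosh y ≤ cosh z) : omegaFn a y z ≤ omegaFn b y z := by
  have hsa : 0 < sinh a := sinh_pos_iff.2 ha
  have hsb : 0 < sinh b := sinh_pos_iff.2 (ha.trans_le hab)
  have hsy : 0 < sinh y := sinh_pos_iff.2 hy
  have hgap := sinh_sub_le_sinh_sub_sinh ha.le hab
  rw [sinh_sub] at hgap
  have key : (cosh a * cosh y - cosh z) * sinh b ≤ (cosh b * cosh y - cosh z) * sinh a := by
    linarith [mul_le_mul_of_nonneg_left hgap (cosh_pos y).le,
      mul_le_mul_of_nonneg_right hyz (sub_nonneg.2 (sinh_le_sinh.2 hab))]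
  rw [omegaFn, omegaFn, div_le_div_iff₀ (by positivity) (by positivity)]
  linarith [mul_le_mul_of_nonneg_right key hsy.le]

theorem omegaFn_le_omegaFn {a b x y z : ℝ} (ha : 0 < a) (hax : a ≤ x) (hb : 0 < b) (hby : b ≤ y)
    (hxz : x ≤ z) (hyz : y ≤ z) : omegaFn a b z ≤ omegaFn x y z := by
  have hx : 0 < x := ha.trans_le hax
  calc omegaFn a b z ≤ omegaFn x b z := omegaFn_le_omegaFn_left ha hax hb
        (cosh_le_cosh.2 (abs_le_abs_of_nonneg hb.le (hby.trans hyz)))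
    _ = omegaFn b x z := omegaFn_comm _ _ _
    _ ≤ omegaFn y x z :=
        omegaFn_le_omegaFn_left hb hby hx (cosh_le_cosh.2 (abs_le_abs_of_nonneg hx.le hxz))
    _ = omegaFn x y z := omegaFn_comm _ _ _

theorem neg_one_le_omegaFn {x y z : ℝ} (h : frakN x y z) : -1 ≤ omegaFn x y z := by
  obtain ⟨hx, hy, hz, hzxy, -, -⟩ := h
  have hcz : cosh z ≤ cosh (x + y) := cosh_le_cosh.2 (abs_le_abs_of_nonneg hz.le hzxy)
  rw [cosh_add] at hcz
  rw [omegaFn, le_div_iff₀ (mul_pos (sinh_pos_iff.2 hx) (sinh_pos_iff.2 hy))]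
  linarith

theorem OmegaFn_le_OmegaBar {a b x y z : ℝ} (hN : frakN x y z) (ha : 0 < a) (hax : a ≤ x)
    (hb : 0 < b) (hby : b ≤ y) (hxz : x ≤ z) (hyz : y ≤ z) : OmegaFn x y z ≤ OmegaBar a b z :=
  arccos_le_arccos <| (min_le_left _ _).trans <|
    max_le (omegaFn_le_omegaFn ha hax hb hby hxz hyz) (neg_one_le_omegaFn hN)

theorem Omega_le_A_general (a10 a11 a20 a21 C x₁ x₂ : ℝ)
    (ha10 : 0 < a10) (ha20 : 0 < a20)
    (hC : 0 < C)
    (hx₁ : x₁ ∈ Set.Icc a10 a11) (hx₂ : x₂ ∈ Set.Icc a20 a21)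
    (hN : frakN x₁ x₂ C) :
    OmegaFn x₁ x₂ C ≤ AFn C a10 a11 a20 a21 := by
  obtain ⟨hax₁, -⟩ := hx₁
  obtain ⟨hax₂, -⟩ := hx₂
  have hx₁ : 0 < x₁ := ha10.trans_le hax₁
  have hx₂ : 0 < x₂ := ha20.trans_le hax₂
  rcases le_or_gt C x₂ with hCx₂ | hx₂C
  · calc OmegaFn x₁ x₂ C ≤ thetaFn C a20 := OmegaFn_le_thetaFn hC.le hx₁ ha20 hax₂ hCx₂
      _ ≤ AFn C a10 a11 a20 a21 := by simp only [AFn, A2Fn, le_max_iff, le_refl, true_or, or_true]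
  rcases le_or_gt C x₁ with hCx₁ | hx₁C
  · calc OmegaFn x₁ x₂ C = OmegaFn x₂ x₁ C := by rw [OmegaFn, OmegaFn, omegaFn_comm]
      _ ≤ thetaFn C a10 := OmegaFn_le_thetaFn hC.le hx₂ ha10 hax₁ hCx₁
      _ ≤ AFn C a10 a11 a20 a21 := by simp only [AFn, A2Fn, le_max_iff, le_refl, true_or, or_true]
  · calc OmegaFn x₁ x₂ C ≤ OmegaBar a10 a20 C :=
          OmegaFn_le_OmegaBar hN ha10 hax₁ ha20 hax₂ hx₁C.le hx₂C.le
      _ ≤ AFn C a10 a11 a20 a21 := by simp only [AFn, A1Fn, le_max_iff, le_refl, true_or]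

/-- If `(x₁, x₂)` lies in the rectangle `[a_{1,0}, a_{1,1}] × [a_{2,0}, a_{2,1}]` and
`(x₁, x₂, C) ∈ 𝔑`, then `Ω(x₁, x₂, C) ≤ A(C, a_{1,0}, a_{1,1}, a_{2,0}, a_{2,1})`. -/
theorem Omega_le_A (a10 a11 a20 a21 C x₁ x₂ : ℝ)
    (ha10 : 0 < a10) (ha1 : a10 ≤ a11) (ha20 : 0 < a20) (ha2 : a20 ≤ a21)
    (hC : 0 < C)
    (hx₁ : x₁ ∈ Set.Icc a10 a11) (hx₂ : x₂ ∈ Set.Icc a20 a21)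
    (hN : frakN x₁ x₂ C) :
    OmegaFn x₁ x₂ C ≤ AFn C a10 a11 a20 a21 :=
  Omega_le_A_general a10 a11 a20 a21 C x₁ x₂ ha10 ha20 hC hx₁ hx₂ hN
end

section
/- For every real number η ≥ 0, the function F defined on (0, ∞) by F(x) = cosh(f₁(x) + η)/cosh(x/2) is strictly monotone decreasing, where f₁(x) = log((eˣ + 3)/(eˣ − 1)) for x > 0. -/
/-! No calculus is needed. Since `(eˣ + 3)/(eˣ - 1) = 1 + 4/(eˣ - 1)`, `f₁` is positive and
strictly decreasing on `(0, ∞)`, so `f₁ + η` stays in `[0, ∞)`, where `cosh` is strictly increasing.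
Hence the numerator is positive and strictly decreasing, while the denominator `cosh (x / 2)` is
positive and increasing. -/

/-- `f₁(x) = log((eˣ + 3)/(eˣ − 1))` for `x > 0`. -/
noncomputable def fOne (x : ℝ) : ℝ := Real.log ((Real.exp x + 3) / (Real.exp x - 1))

open Real Set

lemma StrictAntiOn.div_of_monotoneOn {α : Type*} [Preorder α] {s : Set α} {f g : α → ℝ}
    (hf : StrictAntiOn f s) (hg : MonotoneOn g s) (hf₀ : ∀ x ∈ s, 0 ≤ f x)
    (hg₀ : ∀ x ∈ s, 0 < g x) : StrictAntiOn (fun x => f x / g x) s := by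
  intro a ha b hb hab
  calc f b / g b ≤ f b / g a := div_le_div_of_nonneg_left (hf₀ b hb) (hg₀ a ha) (hg ha hb hab.le)
    _ < f a / g a := div_lt_div_of_pos_right (hf ha hb hab) (hg₀ a ha)

lemma one_lt_exp_add_three_div_exp_sub_one {x : ℝ} (hx : 0 < x) :
    1 < (exp x + 3) / (exp x - 1) := by
  have h := one_lt_exp_iff.mpr hx
  rw [one_lt_div (by linarith)]
  linarith

lemma fOne_pos {x : ℝ} (hx : 0 < x) : 0 < fOne x :=
  log_pos (one_lt_exp_add_three_div_exp_sub_one hx)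

lemma strictAntiOn_fOne : StrictAntiOn fOne (Ioi 0) := by
  intro a (ha : 0 < a) b (hb : 0 < b) hab
  have ha₁ := one_lt_exp_iff.mpr ha
  have hb₁ := one_lt_exp_iff.mpr hb
  have hexp := exp_lt_exp.mpr hab
  refine log_lt_log (by linarith [one_lt_exp_add_three_div_exp_sub_one hb]) ?_
  rw [div_lt_div_iff₀ (by linarith) (by linarith)]
  nlinarith

lemma monotoneOn_cosh_half : MonotoneOn (fun x : ℝ => cosh (x / 2)) (Ioi 0) := by
  intro a (ha : 0 < a) b (hb : 0 < b) hab
  rw [cosh_le_cosh, abs_of_pos (half_pos ha), abs_of_pos (half_pos hb)]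
  linarith

/-- For every `η ≥ 0`, the function `F(x) = cosh(f₁(x) + η)/cosh(x/2)` is strictly monotone
decreasing on `(0, ∞)`. -/
theorem strictAntiOn_cosh_fOne_div_cosh (η : ℝ) (hη : 0 ≤ η) :
    StrictAntiOn (fun x : ℝ => Real.cosh (fOne x + η) / Real.cosh (x / 2))
      (Set.Ioi (0 : ℝ)) := by
  have hshift_nonneg : ∀ x ∈ Ioi (0 : ℝ), 0 ≤ fOne x + η := fun x hx =>
    add_nonneg (fOne_pos hx).le hη
  have hnum : StrictAntiOn (fun x => cosh (fOne x + η)) (Ioi 0) :=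
    cosh_strictMonoOn.comp_strictAntiOn
      (fun a ha b hb hab => add_lt_add_left (strictAntiOn_fOne ha hb hab) η) hshift_nonneg
  exact hnum.div_of_monotoneOn monotoneOn_cosh_half (fun x _ => (cosh_pos _).le)
    (fun x _ => cosh_pos _)
end

section
/- Let x⁻, x⁺, y⁻, y⁺, z⁺ be positive real numbers with x⁻ ≤ x⁺ and y⁻ ≤ y⁺. Then for all x, y, z with x⁻ ≤ x ≤ x⁺, y⁻ ≤ y ≤ y⁺, and 0 < z ≤ z⁺, we have ω(x, y, z) ≥ ω⁻(x⁻, x⁺, y⁻, y⁺, z⁺), and consequently Ω̄(x, y, z) ≤ Ω̄⁺(x⁻, x⁺, y⁻, y⁺, z⁺). -/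
/-- `ω⁻(x⁻, x⁺, y⁻, y⁺, z⁺) = coth(x⁺)·coth(y⁺) − cosh(z⁺)·csch(x⁻)·csch(y⁻)`. -/
noncomputable def omegaMinus (xm xp ym yp zp : ℝ) : ℝ :=
  (Real.cosh xp / Real.sinh xp) * (Real.cosh yp / Real.sinh yp) -
    Real.cosh zp * ((1 / Real.sinh xm) * (1 / Real.sinh ym))

/-- `Ω̄⁺(x⁻, x⁺, y⁻, y⁺, z⁺) = arccos(min(max(ω⁻(x⁻, x⁺, y⁻, y⁺, z⁺), −1), 1))`. -/
noncomputable def OmegaBarPlus (xm xp ym yp zp : ℝ) : ℝ :=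
  Real.arccos (min (max (omegaMinus xm xp ym yp zp) (-1)) 1)

/-! Since `ω(x, y, z) = coth x · coth y − cosh z · csch x · csch y`, it is `ω⁻(x, x, y, y, z)`, and
`ω⁻` decreases in `x⁺, y⁺, z⁺` and increases in `x⁻, y⁻` because `coth` and `csch` decrease on
`(0, ∞)` while `cosh` increases. `arccos` is antitone on all of `ℝ`, so the clamped bound follows. -/

open Real

lemma cosh_div_sinh_le_cosh_div_sinh {a b : ℝ} (ha : 0 < a) (hab : a ≤ b) :
    cosh b / sinh b ≤ cosh a / sinh a := by
  have hsa : 0 < sinh a := sinh_pos_iff.2 ha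
  have hsb : 0 < sinh b := sinh_pos_iff.2 (ha.trans_le hab)
  have hsub : 0 ≤ sinh (b - a) := sinh_nonneg_iff.2 (sub_nonneg.2 hab)
  rw [div_le_div_iff₀ hsb hsa]
  -- `cosh a · sinh b − cosh b · sinh a = sinh (b − a)`
  nlinarith [sinh_sub b a]

lemma omegaFn_eq_omegaMinus (x y z : ℝ) : omegaFn x y z = omegaMinus x x y y z := by
  unfold omegaFn omegaMinus
  ring

lemma omegaMinus_le_omegaMinus {xm xp ym yp zp xm' xp' ym' yp' zp' : ℝ}
    (hxm : 0 < xm) (hxm' : xm ≤ xm') (hxp' : 0 < xp') (hxp : xp' ≤ xp)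
    (hym : 0 < ym) (hym' : ym ≤ ym') (hyp' : 0 < yp') (hyp : yp' ≤ yp) (hz : |zp'| ≤ |zp|) :
    omegaMinus xm xp ym yp zp ≤ omegaMinus xm' xp' ym' yp' zp' := by
  have hsxm : 0 < sinh xm := sinh_pos_iff.2 hxm
  have hsym : 0 < sinh ym := sinh_pos_iff.2 hym
  have hcoth : cosh xp / sinh xp * (cosh yp / sinh yp) ≤
      cosh xp' / sinh xp' * (cosh yp' / sinh yp') := by
    have hsxp' : 0 < sinh xp' := sinh_pos_iff.2 hxp'
    have hsyp : 0 < sinh yp := sinh_pos_iff.2 (hyp'.trans_le hyp)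
    exact mul_le_mul (cosh_div_sinh_le_cosh_div_sinh hxp' hxp)
      (cosh_div_sinh_le_cosh_div_sinh hyp' hyp) (by positivity) (by positivity)
  have hcsch : cosh zp' * (1 / sinh xm' * (1 / sinh ym')) ≤
      cosh zp * (1 / sinh xm * (1 / sinh ym)) := by
    have hsxm' : 0 < sinh xm' := sinh_pos_iff.2 (hxm.trans_le hxm')
    have hsym' : 0 < sinh ym' := sinh_pos_iff.2 (hym.trans_le hym')
    have hcosh : cosh zp' ≤ cosh zp := cosh_le_cosh.2 hz
    gcongr
    · exact sinh_le_sinh.2 hxm'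
    · exact sinh_le_sinh.2 hym'
  unfold omegaMinus
  linarith

theorem omegaMinus_le_omega_general (xm xp ym yp zp : ℝ)
    (hxm : 0 < xm) (hym : 0 < ym) :
    ∀ x y z : ℝ, xm ≤ x → x ≤ xp → ym ≤ y → y ≤ yp → 0 < z → z ≤ zp →
      omegaMinus xm xp ym yp zp ≤ omegaFn x y z ∧
        OmegaBar x y z ≤ OmegaBarPlus xm xp ym yp zp := by
  intro x y z hxm_le hx_le hym_le hy_le hz hz_le
  have hω : omegaMinus xm xp ym yp zp ≤ omegaFn x y z := by
    rw [omegaFn_eq_omegaMinus]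
    exact omegaMinus_le_omegaMinus hxm hxm_le (hxm.trans_le hxm_le) hx_le
      hym hym_le (hym.trans_le hym_le) hy_le (abs_le_abs_of_nonneg hz.le hz_le)
  refine ⟨hω, arccos_le_arccos ?_⟩
  gcongr

/-- For positive `x⁻ ≤ x⁺`, `y⁻ ≤ y⁺` and `z⁺ > 0`: whenever `x⁻ ≤ x ≤ x⁺`,
`y⁻ ≤ y ≤ y⁺` and `0 < z ≤ z⁺`, we have `ω(x,y,z) ≥ ω⁻(x⁻,x⁺,y⁻,y⁺,z⁺)` and consequently
`Ω̄(x,y,z) ≤ Ω̄⁺(x⁻,x⁺,y⁻,y⁺,z⁺)`. -/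
theorem omegaMinus_le_omega (xm xp ym yp zp : ℝ)
    (hxm : 0 < xm) (hx : xm ≤ xp) (hym : 0 < ym) (hy : ym ≤ yp) (hzp : 0 < zp) :
    ∀ x y z : ℝ, xm ≤ x → x ≤ xp → ym ≤ y → y ≤ yp → 0 < z → z ≤ zp →
      omegaMinus xm xp ym yp zp ≤ omegaFn x y z ∧
        OmegaBar x y z ≤ OmegaBarPlus xm xp ym yp zp :=
  omegaMinus_le_omega_general xm xp ym yp zp hxm hym
end
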